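/- arXiv:1310.3048 — 2 statements merged into one kernel-verified Lean document; each statement's English description precedes it below -/
import Mathlib

section
/- Let M be a graded abelian group with differential d (d² = 0) and a decreasing filtration F^pM preserved by d, with associated spectral sequence (E^p_r, d_r). For an integer l, let E(l)^p_r denote the spectral sequence of the quotient filtered complex M/F^lM and π : M → M/F^lM the projection. If p < l, then the induced map π : E^p_r → E(l)^p_r is injective. -/
/-!
Spectral sequence of a filtered differential abelian group `M`:
`Z^p_r = {x ∈ F^pM ∣ dx ∈ F^{p+r}M}`, `E^p_r = Z^p_r/(Z^{p+1}_{r-1} + d Z^{p-r+1}_{r-1})`.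
We formalize the injectivity of the map induced on `E^p_r` by the projection
`π : M → M/F^lM` (for `p < l`) at the level of elements: if `x ∈ Z^p_r` and `π x` lies in
the "boundary" subgroup of the quotient spectral sequence, then `x` lies in the
boundary subgroup of the spectral sequence of `M`.
-/

/-- The cycles `Z^p_r = {x ∈ F^pM ∣ dx ∈ F^{p+r}M}` of a filtered differential group. -/
def specZ {M : Type*} [AddCommGroup M] (d : M →+ M) (F : ℤ → AddSubgroup M)
    (p r : ℤ) : AddSubgroup M :=
  F p ⊓ (F (p + r)).comap d

/-- The boundary subgroup `Z^{p+1}_{r-1} + d Z^{p-r+1}_{r-1}`, the denominator of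
`E^p_r = Z^p_r/(Z^{p+1}_{r-1} + d Z^{p-r+1}_{r-1})`. -/
def specB {M : Type*} [AddCommGroup M] (d : M →+ M) (F : ℤ → AddSubgroup M)
    (p r : ℤ) : AddSubgroup M :=
  specZ d F (p + 1) (r - 1) ⊔ (specZ d F (p - r + 1) (r - 1)).map d

/-- The induced filtration on the quotient `M/F^lM`. -/
def quotF {M : Type*} [AddCommGroup M] (F : ℤ → AddSubgroup M) (l p : ℤ) :
    AddSubgroup (M ⧸ F l) :=
  (F p).map (QuotientAddGroup.mk' (F l))

/-- The induced differential on the quotient `M/F^lM`. -/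
def quotD {M : Type*} [AddCommGroup M] (d : M →+ M) (F : ℤ → AddSubgroup M) (l : ℤ)
    (hdF : ∀ p, ∀ x ∈ F p, d x ∈ F p) : (M ⧸ F l) →+ (M ⧸ F l) :=
  QuotientAddGroup.map (F l) (F l) d (fun x hx => hdF l x hx)

/-!
Write `π x = ȳ + d̄ z̄` with `ȳ ∈ Z(l)^{p+1}_{r-1}` and `z̄ ∈ Z(l)^{p-r+1}_{r-1}`, and lift `z̄` to
`z ∈ F^{p-r+1}M`. Since `p < l`, we have `F^lM ⊆ F^{p+1}M ⊆ F^pM`, so the conditions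
`π(x - dz) = ȳ ∈ F^{p+1}(M/F^lM)` and `d̄ z̄ ∈ F^p(M/F^lM)` lift to `x - dz ∈ F^{p+1}M` and
`dz ∈ F^pM`. Then `x = (x - dz) + dz` with `x - dz ∈ Z^{p+1}_{r-1}` (as `d(x - dz) = dx`) and
`z ∈ Z^{p-r+1}_{r-1}`.
-/

section

variable {M : Type*} [AddCommGroup M]

theorem mk'_mem_quotF_iff {F : ℤ → AddSubgroup M} (hF : ∀ p q : ℤ, p ≤ q → F q ≤ F p)
    {l q : ℤ} (hql : q ≤ l) (m : M) :
    QuotientAddGroup.mk' (F l) m ∈ quotF F l q ↔ m ∈ F q := by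
  rw [← AddSubgroup.mem_comap, quotF, AddSubgroup.comap_map_eq, QuotientAddGroup.ker_mk',
    sup_eq_left.mpr (hF q l hql)]

theorem quotD_mk' (d : M →+ M) (F : ℤ → AddSubgroup M) (l : ℤ)
    (hdF : ∀ p, ∀ x ∈ F p, d x ∈ F p) (m : M) :
    quotD d F l hdF (QuotientAddGroup.mk' (F l) m) = QuotientAddGroup.mk' (F l) (d m) :=
  rfl

theorem mem_specB_of_sub_d_mem {d : M →+ M} (hd : ∀ x, d (d x) = 0) {F : ℤ → AddSubgroup M}
    {p r : ℤ} {x z : M} (hdx : d x ∈ F (p + r)) (hz : z ∈ F (p - r + 1)) (hdz : d z ∈ F p)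
    (hxz : x - d z ∈ F (p + 1)) : x ∈ specB d F p r := by
  have hxz_cycle : x - d z ∈ specZ d F (p + 1) (r - 1) := by
    refine ⟨hxz, show d (x - d z) ∈ F (p + 1 + (r - 1)) from ?_⟩
    rwa [map_sub, hd, sub_zero, show p + 1 + (r - 1) = p + r by ring]
  have hz_cycle : z ∈ specZ d F (p - r + 1) (r - 1) :=
    ⟨hz, show d z ∈ F (p - r + 1 + (r - 1)) by rwa [show p - r + 1 + (r - 1) = p by ring]⟩
  exact AddSubgroup.mem_sup.mpr
    ⟨x - d z, hxz_cycle, d z, AddSubgroup.mem_map_of_mem d hz_cycle, sub_add_cancel x (d z)⟩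

end

theorem stmt_0_general {M : Type*} [AddCommGroup M] (d : M →+ M) (hd : ∀ x, d (d x) = 0)
    (F : ℤ → AddSubgroup M) (hF : ∀ p q : ℤ, p ≤ q → F q ≤ F p)
    (hdF : ∀ p, ∀ x ∈ F p, d x ∈ F p)
    (l p r : ℤ) (hpl : p < l)
    (x : M) (hx : x ∈ specZ d F p r)
    (hπx : QuotientAddGroup.mk' (F l) x ∈ specB (quotD d F l hdF) (quotF F l) p r) :
    x ∈ specB d F p r := by
  obtain ⟨y, ⟨hy, -⟩, _, ⟨_, ⟨⟨z, hz, rfl⟩, hdz⟩, rfl⟩, hsum⟩ := AddSubgroup.mem_sup.mp hπx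
  rw [quotD_mk'] at hsum
  replace hdz : d z ∈ F p := by
    have h : QuotientAddGroup.mk' (F l) (d z) ∈ quotF F l (p - r + 1 + (r - 1)) := hdz
    rwa [mk'_mem_quotF_iff hF (by omega), show p - r + 1 + (r - 1) = p by ring] at h
  have hxz : x - d z ∈ F (p + 1) := by
    rw [← mk'_mem_quotF_iff hF (by omega : p + 1 ≤ l), map_sub, ← hsum, add_sub_cancel_right]
    exact hy
  exact mem_specB_of_sub_d_mem hd hx.2 hz hdz hxz

/-- If `p < l`, the map `π : E^p_r → E(l)^p_r` induced by the projection
`π : M → M/F^lM` is injective: any `x ∈ Z^p_r` whose image lies in the boundary subgroup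
of the quotient spectral sequence already lies in the boundary subgroup for `M`. -/
theorem stmt_0 {M : Type*} [AddCommGroup M] (d : M →+ M) (hd : ∀ x, d (d x) = 0)
    (F : ℤ → AddSubgroup M) (hF : ∀ p q : ℤ, p ≤ q → F q ≤ F p)
    (hdF : ∀ p, ∀ x ∈ F p, d x ∈ F p)
    (l p r : ℤ) (hr : 0 ≤ r) (hpl : p < l)
    (x : M) (hx : x ∈ specZ d F p r)
    (hπx : QuotientAddGroup.mk' (F l) x ∈ specB (quotD d F l hdF) (quotF F l) p r) :
    x ∈ specB d F p r :=
  stmt_0_general d hd F hF hdF l p r hpl x hx hπx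
end

section
/- Let M be a graded abelian group with differential d and decreasing filtration F^pM preserved by d, with spectral sequence (E^p_r, d_r). For an integer l, let E(l)^p_r be the spectral sequence of the quotient M/F^lM and π the projection. If p + r ≤ l, then π : E^p_r → E(l)^p_r is surjective (in fact an isomorphism when moreover p < l). -/
section

open QuotientAddGroup

variable {M : Type*} [AddCommGroup M] (d : M →+ M) (F : ℤ → AddSubgroup M) {l : ℤ}

theorem comap_mk'_quotF {q : ℤ} (h : F l ≤ F q) : (quotF F l q).comap (mk' (F l)) = F q := by
  rw [quotF, AddSubgroup.comap_map_eq, ker_mk', sup_of_le_left h]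

theorem le_specZ (hdl : ∀ x ∈ F l, d x ∈ F l) {p r : ℤ} (hp : F l ≤ F p)
    (hpr : F l ≤ F (p + r)) : F l ≤ specZ d F p r :=
  le_inf hp fun x hx => hpr (hdl x hx)

variable (hdF : ∀ p, ∀ x ∈ F p, d x ∈ F p)

theorem quotD_comp_mk' : (quotD d F l hdF).comp (mk' (F l)) = (mk' (F l)).comp d :=
  rfl

theorem specZ_quotD_eq_map {p r : ℤ} (h : F l ≤ F (p + r)) :
    specZ (quotD d F l hdF) (quotF F l) p r = (specZ d F p r).map (mk' (F l)) := by
  ext y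
  constructor
  · rintro ⟨⟨x, hx, rfl⟩, hdx⟩
    have hdx : d x ∈ (quotF F l (p + r)).comap (mk' (F l)) := hdx
    rw [comap_mk'_quotF F h] at hdx
    exact ⟨x, ⟨hx, hdx⟩, rfl⟩
  · rintro ⟨x, ⟨hx, hdx⟩, rfl⟩
    exact ⟨⟨x, hx, rfl⟩, ⟨d x, hdx, rfl⟩⟩

theorem specB_quotD_eq_map {p r : ℤ} (hpr : F l ≤ F (p + r)) (hp : F l ≤ F p) :
    specB (quotD d F l hdF) (quotF F l) p r = (specB d F p r).map (mk' (F l)) := by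
  rw [specB, specB, specZ_quotD_eq_map d F hdF (by convert hpr using 2; ring),
    specZ_quotD_eq_map d F hdF (by convert hp using 2; ring),
    AddSubgroup.map_sup, AddSubgroup.map_map, AddSubgroup.map_map, quotD_comp_mk']

theorem comap_mk'_specB_quotD {p r : ℤ} (hpl : p < l) (hpr : p + r ≤ l)
    (hF : ∀ p q : ℤ, p ≤ q → F q ≤ F p) :
    (specB (quotD d F l hdF) (quotF F l) p r).comap (mk' (F l)) = specB d F p r := by
  have hker : F l ≤ specB d F p r :=
    (le_specZ d F (hdF l) (hF _ _ hpl) (hF _ _ (by omega))).trans le_sup_left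
  rw [specB_quotD_eq_map d F hdF (hF _ _ hpr) (hF _ _ hpl.le), AddSubgroup.comap_map_eq,
    ker_mk', sup_of_le_left hker]

end

theorem stmt_1_general {M : Type*} [AddCommGroup M] (d : M →+ M)
    (F : ℤ → AddSubgroup M) (hF : ∀ p q : ℤ, p ≤ q → F q ≤ F p)
    (hdF : ∀ p, ∀ x ∈ F p, d x ∈ F p)
    (l p r : ℤ) (hpr : p + r ≤ l) :
    (∀ y ∈ specZ (quotD d F l hdF) (quotF F l) p r,
        ∃ x ∈ specZ d F p r,
          QuotientAddGroup.mk' (F l) x - y ∈ specB (quotD d F l hdF) (quotF F l) p r) ∧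
    (p < l → ∀ x ∈ specZ d F p r,
        QuotientAddGroup.mk' (F l) x ∈ specB (quotD d F l hdF) (quotF F l) p r →
          x ∈ specB d F p r) := by
  refine ⟨fun y hy => ?_, fun hpl x _ hx => ?_⟩
  · rw [specZ_quotD_eq_map d F hdF (hF _ _ hpr)] at hy
    obtain ⟨x, hx, rfl⟩ := hy
    exact ⟨x, hx, by rw [sub_self]; exact zero_mem _⟩
  · rwa [← comap_mk'_specB_quotD d F hdF hpl hpr hF]

/-- If `p + r ≤ l`, then `π : E^p_r → E(l)^p_r` is surjective: every
cycle `y ∈ Z(l)^p_r` agrees, modulo the boundary subgroup of the quotient spectral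
sequence, with the image of a cycle of `M`.  If moreover `p < l`, it is an isomorphism
(also injective). -/
theorem stmt_1 {M : Type*} [AddCommGroup M] (d : M →+ M) (hd : ∀ x, d (d x) = 0)
    (F : ℤ → AddSubgroup M) (hF : ∀ p q : ℤ, p ≤ q → F q ≤ F p)
    (hdF : ∀ p, ∀ x ∈ F p, d x ∈ F p)
    (l p r : ℤ) (hr : 0 ≤ r) (hpr : p + r ≤ l) :
    (∀ y ∈ specZ (quotD d F l hdF) (quotF F l) p r,
        ∃ x ∈ specZ d F p r,
          QuotientAddGroup.mk' (F l) x - y ∈ specB (quotD d F l hdF) (quotF F l) p r) ∧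
    (p < l → ∀ x ∈ specZ d F p r,
        QuotientAddGroup.mk' (F l) x ∈ specB (quotD d F l hdF) (quotF F l) p r →
          x ∈ specB d F p r) :=
  stmt_1_general d F hF hdF l p r hpr
end
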